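/- arXiv:2207.03863 — 5 statements merged into one kernel-verified Lean document; each statement's English description precedes it below -/
import Mathlib

section
/- Every edge-weighted graph G = (V,E) with integer edge weights in {1,...,W} contains a (β, β⁻)-w-EDCS, for any integer parameters β ≥ 3 and β⁻ with β ≥ β⁻ + 2. -/
open scoped Classical

variable {V : Type*} [Fintype V]

/-- Degree of a vertex in a simple graph. -/
noncomputable def sdeg (H : SimpleGraph V) (v : V) : ℕ :=
  (Finset.univ.filter (fun u => H.Adj v u)).card

/-- Weighted degree of a vertex in a simple graph with edge weights `w`. -/
noncomputable def swdeg (H : SimpleGraph V) (w : V → V → ℕ) (v : V) : ℕ :=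
  ∑ u ∈ Finset.univ.filter (fun u => H.Adj v u), w v u

/-- The weight function is symmetric and takes values in `{1, ..., W}` on edges of `G`. -/
def ValidWeights (W : ℕ) (G : SimpleGraph V) (w : V → V → ℕ) : Prop :=
  (∀ u v, w u v = w v u) ∧ ∀ u v, G.Adj u v → 1 ≤ w u v ∧ w u v ≤ W

/-- `H` is a `(β, βm)`-w-EDCS of the edge-weighted simple graph `(G, w)`. -/
def IsWEDCS (G H : SimpleGraph V) (w : V → V → ℕ) (β βm : ℕ) : Prop :=
  H ≤ G ∧
  (∀ u v, H.Adj u v → swdeg H w u + swdeg H w v ≤ β * w u v) ∧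
  (∀ u v, G.Adj u v → ¬ H.Adj u v → βm * w u v ≤ swdeg H w u + swdeg H w v)

/-- `M` is a matching of the simple graph `H`: a set of pairwise vertex-disjoint edges. -/
def IsSMatching (H : SimpleGraph V) (M : Finset (V × V)) : Prop :=
  (∀ e ∈ M, H.Adj e.1 e.2) ∧
  ∀ e ∈ M, ∀ e' ∈ M, e ≠ e' →
    e.1 ≠ e'.1 ∧ e.1 ≠ e'.2 ∧ e.2 ≠ e'.1 ∧ e.2 ≠ e'.2

/-- Total weight of a matching. -/
def smwt (w : V → V → ℕ) (M : Finset (V × V)) : ℕ := ∑ e ∈ M, w e.1 e.2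


/-! Maximise over the subgraphs `H ≤ G` the potential `wedcsPotential k w`, which equals
`4(k+1) Σ_{e ∈ H} w(e)² + 2 Σ_{e ∈ H} w(e) - 2 Σ_v wdeg_H(v)²`. Adding a missing edge `uv` of
weight `x` changes it by `2x (2 (k x - wdeg_H u - wdeg_H v) + 1)`, whose sign is that of
`k x - wdeg_H u - wdeg_H v` because the second factor is odd. Hence at a maximiser no edge of
`H` gains from being removed and no edge of `G ∖ H` gains from being added, which are exactly
the two conditions of a `(k + 2, k)`-w-EDCS. -/

namespace SimpleGraph

variable (H : SimpleGraph V) (w : V → V → ℕ) {u v t : V}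

lemma swdeg_sup_edge_left (huv : u ≠ v) (hnadj : ¬H.Adj u v) :
    swdeg (H ⊔ edge u v) w u = swdeg H w u + w u v := by
  rw [swdeg, swdeg, add_comm, ← Finset.sum_insert (by simpa using hnadj)]
  congr 1
  ext s
  simp only [Finset.mem_filter, Finset.mem_univ, true_and, Finset.mem_insert, sup_adj, edge_adj]
  grind

lemma swdeg_sup_edge_right (hsymm : ∀ a b, w a b = w b a) (huv : u ≠ v) (hnadj : ¬H.Adj u v) :
    swdeg (H ⊔ edge u v) w v = swdeg H w v + w u v := by
  rw [edge_comm, swdeg_sup_edge_left H w huv.symm (fun h => hnadj h.symm), hsymm]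

lemma swdeg_sup_edge_of_ne (htu : t ≠ u) (htv : t ≠ v) :
    swdeg (H ⊔ edge u v) w t = swdeg H w t := by
  rw [swdeg, swdeg]
  congr 1
  ext s
  simp only [Finset.mem_filter, Finset.mem_univ, true_and, sup_adj, edge_adj]
  grind

lemma sum_swdeg_sup_edge (F : ℕ → ℤ) (hsymm : ∀ a b, w a b = w b a) (huv : u ≠ v)
    (hnadj : ¬H.Adj u v) :
    ∑ t, F (swdeg (H ⊔ edge u v) w t) = ∑ t, F (swdeg H w t)
      + (F (swdeg H w u + w u v) - F (swdeg H w u))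
      + (F (swdeg H w v + w u v) - F (swdeg H w v)) := by
  have hdiff := Fintype.sum_eq_add (f := fun t => F (swdeg (H ⊔ edge u v) w t) - F (swdeg H w t))
    u v huv fun t ht => by simp only [swdeg_sup_edge_of_ne H w ht.1 ht.2, sub_self]
  simp only [Finset.sum_sub_distrib, swdeg_sup_edge_left H w huv hnadj,
    swdeg_sup_edge_right H w hsymm huv hnadj] at hdiff
  linarith

end SimpleGraph

open SimpleGraph

noncomputable def wedcsPotential (k : ℕ) (w : V → V → ℕ) (H : SimpleGraph V) : ℤ :=
  ∑ t, ((2 * k + 2) * (swdeg H (fun a b => w a b ^ 2) t : ℤ) + swdeg H w t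
    - 2 * (swdeg H w t : ℤ) ^ 2)

section PotentialGain

variable {k : ℕ} {w : V → V → ℕ} {H : SimpleGraph V} {u v : V}

lemma wedcsPotential_sup_edge (hsymm : ∀ a b, w a b = w b a) (huv : u ≠ v)
    (hnadj : ¬H.Adj u v) :
    wedcsPotential k w (H ⊔ edge u v) = wedcsPotential k w H
      + 2 * w u v * (2 * (k * w u v - swdeg H w u - swdeg H w v) + 1 : ℤ) := by
  have hsymm2 : ∀ a b, w a b ^ 2 = w b a ^ 2 := fun a b => by rw [hsymm]
  simp only [wedcsPotential, Finset.sum_add_distrib, Finset.sum_sub_distrib, ← Finset.mul_sum]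
  rw [sum_swdeg_sup_edge H _ (fun n => (n : ℤ)) hsymm2 huv hnadj,
    sum_swdeg_sup_edge H w (fun n => (n : ℤ)) hsymm huv hnadj,
    sum_swdeg_sup_edge H w (fun n => (n : ℤ) ^ 2) hsymm huv hnadj]
  push_cast
  ring

lemma wedcsPotential_lt_sup_edge_iff (hsymm : ∀ a b, w a b = w b a) (huv : u ≠ v)
    (hnadj : ¬H.Adj u v) (hpos : 0 < w u v) :
    wedcsPotential k w H < wedcsPotential k w (H ⊔ edge u v) ↔
      swdeg H w u + swdeg H w v ≤ k * w u v := by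
  have hx : (0 : ℤ) < w u v := by exact_mod_cast hpos
  rw [wedcsPotential_sup_edge hsymm huv hnadj, ← Nat.cast_le (α := ℤ)]
  push_cast
  constructor <;> intro h <;> nlinarith

lemma wedcsPotential_le_sup_edge_iff (hsymm : ∀ a b, w a b = w b a) (huv : u ≠ v)
    (hnadj : ¬H.Adj u v) (hpos : 0 < w u v) :
    wedcsPotential k w H ≤ wedcsPotential k w (H ⊔ edge u v) ↔
      swdeg H w u + swdeg H w v ≤ k * w u v := by
  have hx : (0 : ℤ) < w u v := by exact_mod_cast hpos
  rw [wedcsPotential_sup_edge hsymm huv hnadj, ← Nat.cast_le (α := ℤ)]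
  push_cast
  constructor <;> intro h <;> nlinarith

end PotentialGain

lemma exists_forall_wedcsPotential_le (k : ℕ) (w : V → V → ℕ) (G : SimpleGraph V) :
    ∃ H ≤ G, ∀ H' ≤ G, wedcsPotential k w H' ≤ wedcsPotential k w H := by
  obtain ⟨H, hH, hmax⟩ := Finset.exists_max_image (Finset.univ.filter (· ≤ G))
    (wedcsPotential k w) ⟨⊥, by simp⟩
  exact ⟨H, by simpa using hH, fun H' hH' => hmax H' (by simpa using hH')⟩

lemma isWEDCS_of_forall_wedcsPotential_le {k : ℕ} {G H : SimpleGraph V} {w : V → V → ℕ}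
    (hsymm : ∀ a b, w a b = w b a) (hpos : ∀ u v, G.Adj u v → 0 < w u v) (hHG : H ≤ G)
    (hmax : ∀ H' ≤ G, wedcsPotential k w H' ≤ wedcsPotential k w H) :
    IsWEDCS G H w (k + 2) k := by
  refine ⟨hHG, fun u v hadj => ?_, fun u v hadj hnadj => ?_⟩
  · have hnadj : ¬(H \ edge u v).Adj u v := by simp [edge_adj, hadj.ne]
    have hH : (H \ edge u v) ⊔ edge u v = H :=
      sdiff_sup_cancel ((edge_le_iff _).mpr (Or.inr hadj))
    have hle := (wedcsPotential_le_sup_edge_iff hsymm hadj.ne hnadj (hpos u v (hHG hadj))).mp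
      ((hmax _ (sdiff_le.trans hHG)).trans_eq (congrArg (wedcsPotential k w) hH).symm)
    rw [← hH, swdeg_sup_edge_left _ w hadj.ne hnadj,
      swdeg_sup_edge_right _ w hsymm hadj.ne hnadj]
    linarith
  · have hsup : H ⊔ edge u v ≤ G := sup_le hHG ((edge_le_iff _).mpr (Or.inr hadj))
    by_contra! hlt
    exact (hmax _ hsup).not_gt
      ((wedcsPotential_lt_sup_edge_iff hsymm hadj.ne hnadj (hpos u v hadj)).mpr hlt.le)

lemma IsWEDCS.mono_left {G H : SimpleGraph V} {w : V → V → ℕ} {β β' βm : ℕ} (hβ : β ≤ β')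
    (h : IsWEDCS G H w β βm) : IsWEDCS G H w β' βm :=
  ⟨h.1, fun u v hadj => (h.2.1 u v hadj).trans (Nat.mul_le_mul_right _ hβ), h.2.2⟩

theorem wedcs_exists_general
    {V : Type*} [Fintype V]
    (W β βm : ℕ) (hββm : βm + 2 ≤ β)
    (G : SimpleGraph V) (w : V → V → ℕ)
    (hw : ValidWeights W G w) :
    ∃ H : SimpleGraph V, IsWEDCS G H w β βm := by
  obtain ⟨hsymm, hbound⟩ := hw
  obtain ⟨H, hHG, hmax⟩ := exists_forall_wedcsPotential_le βm w G
  exact ⟨H, (isWEDCS_of_forall_wedcsPotential_le hsymm (fun u v h => (hbound u v h).1) hHG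
    hmax).mono_left hββm⟩

/-- Every edge-weighted graph with integer weights in `{1,...,W}`
contains a `(β, β⁻)`-w-EDCS, for any integers `β ≥ 3` and `β⁻` with `β ≥ β⁻ + 2`. -/
theorem wedcs_exists
    {V : Type*} [Fintype V]
    (W β βm : ℕ) (hW : 1 ≤ W) (hβ3 : 3 ≤ β) (hββm : βm + 2 ≤ β)
    (G : SimpleGraph V) (w : V → V → ℕ)
    (hw : ValidWeights W G w) :
    ∃ H : SimpleGraph V, IsWEDCS G H w β βm :=
  wedcs_exists_general W β βm hββm G w hw
end

section
/- Let 0 < ε < 1/2 and let W ≥ 1 be an integer. Let β ≥ β⁻ + 2 be integers such that β/β⁻ ≤ 1 + ε/(5W) and β⁻ ≥ 4W/ε. Then any (β, β⁻)-w-EDCS H of a bipartite edge-weighted graph G with integer edge weights in {1,...,W} contains a matching M_H such that (2 − 1/(2W) + ε)·w(M_H) ≥ w(M_G). -/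
/-!
By Egerváry's theorem the bipartite graph `H` has a matching `M` and an integral weighted vertex
cover `y` of `H` with `∑ y ≤ w(M)`. Let every vertex `z` spread `y z` over its `H`-edges in
proportion to their weights, and let `r u` be what `u` collects, so that `∑ r ≤ ∑ y`. The first
EDCS condition bounds `r u` below by the convex function `W t / (W - t)` of
`t = wdeg_H(u) / β - y u`. An edge `uv` of `G` not covered by `y` is missing from `H`, so the second
EDCS condition gives `wdeg_H(u) + wdeg_H(v) ≥ β⁻ w(u,v)`, and Jensen's inequality turns this into
`w(u,v) ≤ (1 + ε/2)(y u + y v) + (1 - 1/(2W) + ε/4)(r u + r v)`; the saving `1/(2W)` comes from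
integrality, `w(u,v) ≥ y u + y v + 1`. Summing over any matching of `G` bounds its weight by
`(2 - 1/(2W) + 3ε/4) ∑ y`.
-/

open scoped Classical

variable {V : Type*} [Fintype V]

open Finset

lemma one_div_two_mul_le_half {W : ℝ} (hW : 1 ≤ W) : 1 / (2 * W) ≤ 1 / 2 := by
  rw [div_le_div_iff₀ (by positivity) two_pos]
  linarith

/-- Jensen for the convex increasing `φ t = W t / (W - t)` on `t < W`: the left side is
`2 φ (x / 2)`. -/
lemma two_mul_div_le_add_of_le_add {W p q x : ℝ} (hp : p < W) (hq : q < W) (hx : x ≤ p + q) :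
    2 * W * x / (2 * W - x) ≤ W * p / (W - p) + W * q / (W - q) := by
  have hp' : 0 < W - p := by linarith
  have hq' : 0 < W - q := by linarith
  have hpq : 0 < 2 * W - (p + q) := by linarith
  calc 2 * W * x / (2 * W - x) ≤ 2 * W * (p + q) / (2 * W - (p + q)) := by
        rw [div_le_div_iff₀ (by linarith) hpq]
        nlinarith [mul_nonneg (sq_nonneg W) (sub_nonneg.2 hx)]
    _ ≤ W * p / (W - p) + W * q / (W - q) := by
        rw [div_add_div _ _ hp'.ne' hq'.ne', div_le_div_iff₀ hpq (by positivity)]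
        nlinarith [mul_nonneg (sq_nonneg W) (sq_nonneg (p - q))]

lemma le_add_mul_of_two_mul_div_le {W w m ρ ε R : ℝ} (hW : 1 ≤ W) (hwW : w ≤ W)
    (hm : 0 ≤ m) (hmw : m + 1 ≤ w) (hρ1 : 1 ≤ ρ) (hρ : ρ ≤ 1 + ε / (5 * W)) (hε : 0 ≤ ε)
    (hR0 : 0 ≤ R) (hR : 2 * W * (w / ρ - m) / (2 * W - (w / ρ - m)) ≤ R) :
    w ≤ (1 + ε / 2) * m + (1 - 1 / (2 * W) + ε / 4) * R := by
  have hΓ0 : 0 ≤ 1 - 1 / (2 * W) + ε / 4 := by linarith [one_div_two_mul_le_half hW]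
  set x := w / ρ - m
  set Γ := 1 - 1 / (2 * W) + ε / 4
  have hwx : w = ρ * (x + m) := by simp only [x]; field_simp; ring
  have hρε : ρ ≤ 1 + ε / 2 := hρ.trans (by gcongr; linarith)
  have hΓ : 2 * W * Γ = 2 * W - 1 + ε * W / 2 := by simp only [Γ]; field_simp; ring
  rcases le_or_gt x 0 with hx | hx
  · nlinarith [mul_nonneg hΓ0 hR0]
  have hxW : x < 2 * W := by
    have : w / ρ ≤ w := div_le_self (by linarith) hρ1
    linarith
  have hρW : 5 * W * (ρ - 1) ≤ ε := by
    have := mul_le_mul_of_nonneg_left hρ (by positivity : (0 : ℝ) ≤ 5 * W)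
    rw [mul_add, mul_div_cancel₀ _ (by positivity)] at this
    linarith
  -- `ρ (2W - x) = 2Wρ - w + ρ m` with `m ≤ w - 1`, `w ≤ W`, and `(3W - 1) ε / (5W) ≤ ε W / 2`
  have hkey : ρ * (2 * W - x) ≤ 2 * W * Γ := by
    rw [hΓ]
    nlinarith [mul_le_mul_of_nonneg_left hρW (by linarith : (0 : ℝ) ≤ 3 * W - 1),
      mul_nonneg hε (by nlinarith : (0 : ℝ) ≤ 5 * W ^ 2 - 6 * W + 2)]
  suffices ρ * x ≤ Γ * (2 * W * x / (2 * W - x)) by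
    nlinarith [mul_le_mul_of_nonneg_left hR hΓ0]
  rw [mul_div_assoc', le_div_iff₀ (by linarith)]
  nlinarith [mul_le_mul_of_nonneg_left hkey hx.le]

lemma sub_mul_div_le_mul_div {a yu yz du dz β W : ℝ} (hcov : a ≤ yu + yz) (hyz : 0 ≤ yz)
    (ha : 0 ≤ a) (haW : a ≤ W) (hW : 0 ≤ W) (hdu : 0 ≤ du) (hdz : 0 < dz) (hdeg : du + dz ≤ β * a)
    (hlt : du < β * W) :
    (a - yu) * (W / (β * W - du)) ≤ yz * a / dz := by
  have hden : 0 < β * W - du := by linarith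
  rcases le_or_gt a yu with h | h
  · exact (mul_nonpos_of_nonpos_of_nonneg (by linarith) (div_nonneg hW hden.le)).trans
      (div_nonneg (mul_nonneg hyz ha) hdz.le)
  calc (a - yu) * (W / (β * W - du)) ≤ yz * (W / (β * W - du)) := by gcongr; linarith
    _ ≤ yz * (a / dz) := by
        refine mul_le_mul_of_nonneg_left ?_ hyz
        rw [div_le_div_iff₀ hden hdz]
        nlinarith [mul_le_mul_of_nonneg_left hdeg hW, mul_le_mul_of_nonneg_right haW hdu]
    _ = yz * a / dz := by ring

section Matchings

variable {α : Type*} {H : SimpleGraph α} {M : Finset (α × α)}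

lemma IsSMatching.sum_add_eq (hM : IsSMatching H M) {R : Type*} [AddCommMonoid R] (g : α → R) :
    ∑ e ∈ M, (g e.1 + g e.2) = ∑ v ∈ M.image Prod.fst ∪ M.image Prod.snd, g v := by
  have hfst : Set.InjOn Prod.fst (M : Set (α × α)) := fun e he e' he' h => by
    by_contra hne
    exact (hM.2 e he e' he' hne).1 h
  have hsnd : Set.InjOn Prod.snd (M : Set (α × α)) := fun e he e' he' h => by
    by_contra hne
    exact (hM.2 e he e' he' hne).2.2.2 h
  have hdisj : Disjoint (M.image Prod.fst) (M.image Prod.snd) := by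
    simp only [disjoint_left, mem_image]
    rintro _ ⟨e, he, rfl⟩ ⟨e', he', h⟩
    by_cases hne : e = e'
    · subst hne
      exact H.irrefl (h ▸ hM.1 e he)
    · exact (hM.2 e he e' he' hne).2.1 h.symm
  rw [sum_union hdisj, sum_image hfst, sum_image hsnd, sum_add_distrib]

lemma IsSMatching.sum_add_le [Fintype α] (hM : IsSMatching H M) {R : Type*} [AddCommMonoid R]
    [PartialOrder R] [IsOrderedAddMonoid R] {g : α → R} (hg : ∀ v, 0 ≤ g v) :
    ∑ e ∈ M, (g e.1 + g e.2) ≤ ∑ v, g v :=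
  hM.sum_add_eq g ▸ sum_le_univ_sum_of_nonneg hg

lemma IsSMatching.smwt_le_mul_sum [Fintype α] (hM : IsSMatching H M) {w : α → α → ℕ}
    {y r : α → ℝ} {a b : ℝ} (ha : 0 ≤ a) (hb : 0 ≤ b) (hy : ∀ v, 0 ≤ y v)
    (hr : ∀ v, 0 ≤ r v) (hry : ∑ v, r v ≤ ∑ v, y v)
    (hedge : ∀ e ∈ M, (w e.1 e.2 : ℝ) ≤ a * (y e.1 + y e.2) + b * (r e.1 + r e.2)) :
    (smwt w M : ℝ) ≤ (a + b) * ∑ v, y v :=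
  calc (smwt w M : ℝ) = ∑ e ∈ M, (w e.1 e.2 : ℝ) := by push_cast [smwt]; rfl
    _ ≤ ∑ e ∈ M, (a * (y e.1 + y e.2) + b * (r e.1 + r e.2)) := sum_le_sum hedge
    _ = a * ∑ e ∈ M, (y e.1 + y e.2) + b * ∑ e ∈ M, (r e.1 + r e.2) := by
        rw [sum_add_distrib, mul_sum, mul_sum]
    _ ≤ a * ∑ v, y v + b * ∑ v, y v := by
        gcongr
        exacts [hM.sum_add_le hy, (hM.sum_add_le hr).trans hry]
    _ = (a + b) * ∑ v, y v := by ring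

lemma isSMatching_of_injOn {A : Set α} (hA : ∀ u v, H.Adj u v → (u ∈ A ↔ v ∉ A))
    (hadj : ∀ e ∈ M, H.Adj e.1 e.2) (hside : ∀ e ∈ M, e.1 ∈ A)
    (hfst : Set.InjOn Prod.fst (M : Set (α × α))) (hsnd : Set.InjOn Prod.snd (M : Set (α × α))) :
    IsSMatching H M := by
  refine ⟨hadj, fun e he e' he' hne => ⟨fun h => hne (hfst he he' h), fun h => ?_, fun h => ?_,
    fun h => hne (hsnd he he' h)⟩⟩
  · exact (hA _ _ (hadj e' he')).1 (hside e' he') (h ▸ hside e he)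
  · exact (hA _ _ (hadj e he)).1 (hside e he) (h ▸ hside e' he')

end Matchings

/-- A special case of the Mendelsohn–Dulmage theorem. -/
theorem exists_matching_of_injOn {α β : Type*} (f : α → β) (g : β → α) (PA : Finset α)
    (PB : Finset β) (hf : Set.InjOn f PA) (hg : Set.InjOn g PB) :
    ∃ M : Finset (α × β), (∀ e ∈ M, e.1 ∈ PA ∧ f e.1 = e.2 ∨ e.2 ∈ PB ∧ g e.2 = e.1) ∧
      Set.InjOn Prod.fst (M : Set (α × β)) ∧ Set.InjOn Prod.snd (M : Set (α × β)) ∧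
      PA ⊆ M.image Prod.fst ∧ PB ⊆ M.image Prod.snd := by
  induction PB using Finset.strongInduction generalizing PA with
  | H PB ih =>
  by_cases hcov : PB ⊆ PA.image f
  · refine ⟨PA.image fun a => (a, f a), by simp +contextual, ?_, ?_,
      by simp [image_image, Function.comp_def],
      by simpa [image_image, Function.comp_def] using hcov⟩
    · simp only [coe_image]
      rintro _ ⟨a, -, rfl⟩ _ ⟨a', -, rfl⟩ h
      simp_all
    · simp only [coe_image]
      rintro _ ⟨a, ha, rfl⟩ _ ⟨a', ha', rfl⟩ h
      rw [hf ha ha' h]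
  -- otherwise match some `b` missed by `f` to `g b`, and recurse without both
  obtain ⟨b, hb, hbf⟩ := not_subset.1 hcov
  obtain ⟨M, hMe, hfst, hsnd, hPA, hPB⟩ := ih (PB.erase b) (erase_ssubset hb) (PA.erase (g b))
    (hf.mono (by simp)) (hg.mono (by simp))
  have hgb : ∀ e ∈ M, e.1 ≠ g b ∧ e.2 ≠ b := by
    intro e he
    rcases hMe e he with ⟨ha, hfa⟩ | ⟨hb', hgb'⟩
    · exact ⟨(mem_erase.1 ha).1, fun h => hbf (mem_image.2 ⟨e.1, mem_of_mem_erase ha, h ▸ hfa⟩)⟩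
    · exact ⟨fun h => (mem_erase.1 hb').1 (hg (mem_of_mem_erase hb') hb (hgb' ▸ h)),
        (mem_erase.1 hb').1⟩
  have hnotin : (g b, b) ∉ M := fun h => (hgb _ h).1 rfl
  refine ⟨insert (g b, b) M, ?_, ?_, ?_, ?_, ?_⟩
  · refine forall_mem_insert _ _ _ |>.2 ⟨by simp [hb], fun e he => ?_⟩
    rcases hMe e he with ⟨ha, hfa⟩ | ⟨hb', hgb'⟩
    exacts [Or.inl ⟨mem_of_mem_erase ha, hfa⟩, Or.inr ⟨mem_of_mem_erase hb', hgb'⟩]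
  · rw [coe_insert, Set.injOn_insert hnotin]
    exact ⟨hfst, fun ⟨e, he, h⟩ => (hgb e he).1 h⟩
  · rw [coe_insert, Set.injOn_insert hnotin]
    exact ⟨hsnd, fun ⟨e, he, h⟩ => (hgb e he).2 h⟩
  · intro a ha
    by_cases h : a = g b
    · exact mem_image.2 ⟨(g b, b), mem_insert_self _ _, h.symm⟩
    · exact image_subset_image (subset_insert _ _) (hPA (mem_erase.2 ⟨h, ha⟩))
  · intro b' hb'
    by_cases h : b' = b
    · exact mem_image.2 ⟨(g b, b), mem_insert_self _ _, h.symm⟩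
    · exact image_subset_image (subset_insert _ _) (hPB (mem_erase.2 ⟨h, hb'⟩))

/-- Hall's theorem, with `f` extended by the identity outside `s`. -/
lemma exists_injOn_of_card_le_card_biUnion {α : Type*} {s : Finset α} {t : α → Finset α}
    (h : ∀ s' ⊆ s, #s' ≤ #(s'.biUnion t)) : ∃ f : α → α, Set.InjOn f s ∧ ∀ a ∈ s, f a ∈ t a := by
  obtain ⟨f, hf, hft⟩ := (all_card_le_biUnion_card_iff_exists_injective fun a : s => t a).1
    fun s' => by
      simpa [image_biUnion, card_image_of_injective _ Subtype.val_injective] using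
        h (s'.image Subtype.val) fun a ha => by
          obtain ⟨⟨a, ha'⟩, -, rfl⟩ := mem_image.1 ha
          exact ha'
  refine ⟨fun a => if ha : a ∈ s then f ⟨a, ha⟩ else a, fun a ha b hb hab => ?_, fun a ha => ?_⟩
  · rw [mem_coe] at ha hb
    exact congrArg Subtype.val (hf (by simpa [ha, hb] using hab))
  · simpa [ha] using hft ⟨a, ha⟩

lemma le_swdeg {H : SimpleGraph V} {w : V → V → ℕ} {u v : V} (h : H.Adj u v) :
    w u v ≤ swdeg H w u :=
  single_le_sum (f := fun z => w u z) (fun _ _ => Nat.zero_le _) (by simpa using h)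

def IsWeightedVertexCover (H : SimpleGraph V) (w : V → V → ℕ) (y : V → ℕ) : Prop :=
  ∀ u v, H.Adj u v → w u v ≤ y u + y v

noncomputable def tightNeighbors (H : SimpleGraph V) (w : V → V → ℕ) (y : V → ℕ) (a : V) :
    Finset V :=
  univ.filter fun b => H.Adj a b ∧ y a + y b = w a b

lemma exists_min_isWeightedVertexCover (H : SimpleGraph V) (w : V → V → ℕ) :
    ∃ y, IsWeightedVertexCover H w y ∧
      ∀ y', IsWeightedVertexCover H w y' → ∑ v, y v ≤ ∑ v, y' v := by
  obtain ⟨y, hy, hmin⟩ := (measure fun y : V → ℕ => ∑ v, y v).wf.has_min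
    {y | IsWeightedVertexCover H w y} ⟨swdeg H w, fun u v h => (le_swdeg h).trans le_self_add⟩
  exact ⟨y, hy, fun y' hy' => not_lt.1 (hmin y' hy')⟩

/-- Were `s` larger than its tight neighbourhood, lowering the cover by one on `s` and raising it
by one on that neighbourhood would give a smaller cover. -/
lemma card_le_card_biUnion_tightNeighbors {H : SimpleGraph V} {w : V → V → ℕ}
    (hsymm : ∀ u v, w u v = w v u) {A : Set V} (hA : ∀ u v, H.Adj u v → (u ∈ A ↔ v ∉ A))
    {y : V → ℕ} (hcov : IsWeightedVertexCover H w y)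
    (hmin : ∀ y', IsWeightedVertexCover H w y' → ∑ v, y v ≤ ∑ v, y' v) {s : Finset V}
    (hs : ∀ a ∈ s, a ∈ A ∧ 0 < y a) : #s ≤ #(s.biUnion (tightNeighbors H w y)) := by
  set N := s.biUnion (tightNeighbors H w y)
  by_contra! hlt
  set y' : V → ℕ := fun v => y v + (if v ∈ N then 1 else 0) - (if v ∈ s then 1 else 0)
  have hy' : ∀ v, y' v + (if v ∈ s then 1 else 0) = y v + (if v ∈ N then 1 else 0) := fun v => by
    by_cases hv : v ∈ s
    · have := (hs v hv).2
      simp only [y', hv, if_true]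
      omega
    · simp [y', hv]
  have hsum : ∑ v, y' v + #s = ∑ v, y v + #N := by
    simpa [sum_add_distrib, sum_boole] using sum_congr rfl fun v (_ : v ∈ univ) => hy' v
  have hside : ∀ a b, H.Adj a b → a ∈ s → b ∉ s ∧ (y a + y b = w a b → b ∈ N) :=
    fun a b hab ha => ⟨fun hb => (hA a b hab).1 (hs a ha).1 (hs b hb).1,
      fun ht => mem_biUnion.2 ⟨a, ha, by simp [tightNeighbors, hab, ht]⟩⟩
  have key : ∀ a b, H.Adj a b → b ∉ s → w a b ≤ y' a + y' b := by
    intro a b hab hb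
    have ha' := hy' a
    have hb' := hy' b
    have := hcov a b hab
    simp only [hb, if_false, add_zero] at hb'
    by_cases ha : a ∈ s
    · by_cases ht : y a + y b = w a b
      · simp only [ha, (hside a b hab ha).2 ht, if_true] at ha' hb'
        omega
      · simp only [ha, if_true] at ha'
        omega
    · simp only [ha, if_false, add_zero] at ha'
      omega
  have hcov' : IsWeightedVertexCover H w y' := by
    intro u v huv
    by_cases hv : v ∈ s
    · rw [hsymm, add_comm]
      exact key v u huv.symm (hside v u huv.symm hv).1
    · exact key u v huv hv
  have := hmin y' hcov'
  omega

/-- Egerváry's theorem (the inequality needed here). -/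
theorem exists_isSMatching_sum_le_smwt {H : SimpleGraph V} {w : V → V → ℕ}
    (hsymm : ∀ u v, w u v = w v u) {A : Set V} (hA : ∀ u v, H.Adj u v → (u ∈ A ↔ v ∉ A)) :
    ∃ M y, IsSMatching H M ∧ IsWeightedVertexCover H w y ∧ ∑ v, y v ≤ smwt w M := by
  obtain ⟨y, hcov, hmin⟩ := exists_min_isWeightedVertexCover H w
  have hAc : ∀ u v, H.Adj u v → (u ∈ Aᶜ ↔ v ∉ Aᶜ) := fun u v h => by
    have := hA u v h
    simp only [Set.mem_compl_iff]
    tauto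
  set PA := univ.filter fun a => a ∈ A ∧ 0 < y a
  set PB := univ.filter fun b => b ∈ Aᶜ ∧ 0 < y b
  obtain ⟨f, hf, hft⟩ := exists_injOn_of_card_le_card_biUnion fun s hs =>
    card_le_card_biUnion_tightNeighbors hsymm hA hcov hmin fun a ha => (mem_filter.1 (hs ha)).2
  obtain ⟨g, hg, hgt⟩ := exists_injOn_of_card_le_card_biUnion fun s hs =>
    card_le_card_biUnion_tightNeighbors hsymm hAc hcov hmin fun a ha => (mem_filter.1 (hs ha)).2
  obtain ⟨M, hMe, hfst, hsnd, hPA, hPB⟩ := exists_matching_of_injOn f g PA PB hf hg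
  have hedge : ∀ e ∈ M, H.Adj e.1 e.2 ∧ y e.1 + y e.2 = w e.1 e.2 ∧ e.1 ∈ A := by
    intro e he
    rcases hMe e he with ⟨ha, hfa⟩ | ⟨hb, hgb⟩
    · have hat := hft e.1 ha
      simp only [tightNeighbors, mem_filter, mem_univ, true_and, hfa] at hat
      exact ⟨hat.1, hat.2, (mem_filter.1 ha).2.1⟩
    · have hbt := hgt e.2 hb
      simp only [tightNeighbors, mem_filter, mem_univ, true_and, hgb] at hbt
      refine ⟨hbt.1.symm, by rw [hsymm, add_comm, hbt.2], ?_⟩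
      simpa using (hAc _ _ hbt.1).1 (mem_filter.1 hb).2.1
  have hM := isSMatching_of_injOn hA (fun e he => (hedge e he).1) (fun e he => (hedge e he).2.2)
    hfst hsnd
  refine ⟨M, y, hM, hcov, le_of_eq ?_⟩
  calc ∑ v, y v = ∑ v ∈ M.image Prod.fst ∪ M.image Prod.snd, y v := by
        refine (sum_subset (subset_univ _) fun v _ hv => ?_).symm
        by_contra hy
        by_cases hvA : v ∈ A
        · exact hv (mem_union_left _ (hPA (by simp [PA, hvA, Nat.pos_of_ne_zero hy])))
        · exact hv (mem_union_right _ (hPB (by simp [PB, hvA, Nat.pos_of_ne_zero hy])))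
    _ = ∑ e ∈ M, (y e.1 + y e.2) := (hM.sum_add_eq y).symm
    _ = smwt w M := sum_congr rfl fun e he => (hedge e he).2.1

/-- Every vertex `z` spreads its cover value `y z` over its `H`-edges in proportion to their
weights; `coverShare H w y u` is what `u` collects. -/
noncomputable def coverShare (H : SimpleGraph V) (w : V → V → ℕ) (y : V → ℕ) (u : V) : ℝ :=
  ∑ z ∈ univ.filter (fun z => H.Adj u z), (y z : ℝ) * w u z / swdeg H w z

section CoverShare

variable {H : SimpleGraph V} {w : V → V → ℕ} {β W : ℕ}

lemma coverShare_nonneg (y : V → ℕ) (u : V) : 0 ≤ coverShare H w y u :=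
  sum_nonneg fun _ _ => by positivity

lemma sum_coverShare_le (hsymm : ∀ u v, w u v = w v u) (y : V → ℕ) :
    ∑ u, coverShare H w y u ≤ ∑ u, (y u : ℝ) := by
  have hswap : ∑ u, coverShare H w y u = ∑ z, (y z : ℝ) * swdeg H w z / swdeg H w z := by
    simp only [coverShare, swdeg]
    rw [sum_comm' (t' := univ) (s' := fun z => univ.filter (fun u => H.Adj z u))
      (by simp [H.adj_comm])]
    refine sum_congr rfl fun z _ => ?_
    push_cast
    rw [mul_sum, sum_div]
    exact sum_congr rfl fun u _ => by rw [hsymm]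
  rw [hswap]
  refine sum_le_sum fun z _ => ?_
  rcases eq_or_ne (swdeg H w z : ℝ) 0 with h | h
  · simp [h]
  · rw [mul_div_cancel_right₀ _ h]

variable (hpos : ∀ u v, H.Adj u v → 0 < w u v)
  (hdeg : ∀ u v, H.Adj u v → swdeg H w u + swdeg H w v ≤ β * w u v)
include hpos hdeg

lemma swdeg_add_one_le {u v : V} (h : H.Adj u v) : swdeg H w u + 1 ≤ β * w u v :=
  (Nat.add_le_add_left ((hpos v u h.symm).trans_le (le_swdeg h.symm)) _).trans (hdeg u v h)

lemma card_neighbors_le (u : V) : #(univ.filter (fun z => H.Adj u z)) ≤ β := by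
  set d := swdeg H w u
  refine Nat.le_of_mul_le_mul_right ?_ d.succ_pos
  calc #(univ.filter (fun z => H.Adj u z)) * (d + 1)
      = ∑ z ∈ univ.filter (fun z => H.Adj u z), (d + 1) := by rw [sum_const, smul_eq_mul]
    _ ≤ ∑ z ∈ univ.filter (fun z => H.Adj u z), β * w u z :=
        sum_le_sum fun z hz => swdeg_add_one_le hpos hdeg (mem_filter.1 hz).2
    _ = β * d := (mul_sum _ _ _).symm
    _ ≤ β * (d + 1) := Nat.mul_le_mul_left _ d.le_succ

variable (hle : ∀ u v, H.Adj u v → w u v ≤ W)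
include hle

lemma swdeg_lt_mul (hβ : 0 < β) (hW : 0 < W) (u : V) : swdeg H w u < β * W := by
  by_cases h : ∃ z, H.Adj u z
  · obtain ⟨z, hz⟩ := h
    exact (swdeg_add_one_le hpos hdeg hz).trans (Nat.mul_le_mul_left _ (hle u z hz))
  · push Not at h
    have : swdeg H w u = 0 := sum_eq_zero fun z hz => absurd (mem_filter.1 hz).2 (h z)
    rw [this]
    positivity

lemma sub_mul_mul_div_le_coverShare {y : V → ℕ} (hcov : IsWeightedVertexCover H w y)
    (hβ : 0 < β) (hW : 0 < W) (u : V) :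
    ((swdeg H w u : ℝ) - β * y u) * (W / (β * W - swdeg H w u)) ≤ coverShare H w y u := by
  have hlt : (swdeg H w u : ℝ) < β * W := by exact_mod_cast swdeg_lt_mul hpos hdeg hle hβ hW u
  have hN : (#(univ.filter (fun z => H.Adj u z)) : ℝ) ≤ β := by
    exact_mod_cast card_neighbors_le hpos hdeg u
  calc ((swdeg H w u : ℝ) - β * y u) * (W / (β * W - swdeg H w u))
      ≤ ((swdeg H w u : ℝ) - #(univ.filter (fun z => H.Adj u z)) * y u) *
          (W / (β * W - swdeg H w u)) := by gcongr
    _ = ∑ z ∈ univ.filter (fun z => H.Adj u z),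
          ((w u z : ℝ) - y u) * (W / (β * W - swdeg H w u)) := by
        rw [← sum_mul, sum_sub_distrib, sum_const, nsmul_eq_mul, swdeg]
        push_cast
        rfl
    _ ≤ coverShare H w y u := by
        refine sum_le_sum fun z hz => ?_
        have hadj := (mem_filter.1 hz).2
        exact sub_mul_div_le_mul_div (by exact_mod_cast hcov u z hadj) (by positivity)
          (by positivity) (by exact_mod_cast hle u z hadj) (by positivity) (by positivity)
          (by exact_mod_cast (hpos z u hadj.symm).trans_le (le_swdeg hadj.symm))
          (by exact_mod_cast hdeg u z hadj) hlt

lemma mul_div_le_coverShare {y : V → ℕ} (hcov : IsWeightedVertexCover H w y) (hβ : 0 < β)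
    (hW : 0 < W) (u : V) :
    (W : ℝ) * (swdeg H w u / β - y u) / (W - (swdeg H w u / β - y u)) ≤ coverShare H w y u := by
  have hβ' : (0 : ℝ) < β := by exact_mod_cast hβ
  have hlt : (swdeg H w u : ℝ) / β < W := by
    rw [div_lt_iff₀ hβ', mul_comm]
    exact_mod_cast swdeg_lt_mul hpos hdeg hle hβ hW u
  set t := (swdeg H w u : ℝ) / β - y u
  have ht : t ≤ swdeg H w u / β := by simp only [t]; linarith [(y u).cast_nonneg (α := ℝ)]
  rcases le_or_gt t 0 with ht0 | ht0
  · exact (div_nonpos_of_nonpos_of_nonneg (mul_nonpos_of_nonneg_of_nonpos (by positivity) ht0)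
      (by linarith)).trans (coverShare_nonneg y u)
  calc W * t / (W - t) ≤ W * t / (W - swdeg H w u / β) := by gcongr
    _ = ((swdeg H w u : ℝ) - β * y u) * (W / (β * W - swdeg H w u)) := by
        simp only [t]
        field_simp
    _ ≤ coverShare H w y u := sub_mul_mul_div_le_coverShare hpos hdeg hle hcov hβ hW u

end CoverShare

lemma weight_le_of_isWEDCS {G H : SimpleGraph V} {w : V → V → ℕ} {W β βm : ℕ} {ε : ℝ}
    {y : V → ℕ} (hw : ValidWeights W G w) (hH : IsWEDCS G H w β βm)
    (hcov : IsWeightedVertexCover H w y) (hβm : 0 < βm) (hββm : βm ≤ β)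
    (hratio : (β : ℝ) / βm ≤ 1 + ε / (5 * W)) (hε : 0 ≤ ε) {u v : V} (huv : G.Adj u v) :
    (w u v : ℝ) ≤ (1 + ε / 2) * (y u + y v) +
      (1 - 1 / (2 * W) + ε / 4) * (coverShare H w y u + coverShare H w y v) := by
  obtain ⟨hHG, hdeg, hnotin⟩ := hH
  have hpos : ∀ a b, H.Adj a b → 0 < w a b := fun a b h => (hw.2 a b (hHG h)).1
  have hle : ∀ a b, H.Adj a b → w a b ≤ W := fun a b h => (hw.2 a b (hHG h)).2
  obtain ⟨hw1, hwW⟩ := hw.2 u v huv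
  have hW : (1 : ℝ) ≤ W := by exact_mod_cast hw1.trans hwW
  have hβ : 0 < β := hβm.trans_le hββm
  have hshares : 0 ≤ coverShare H w y u + coverShare H w y v :=
    add_nonneg (coverShare_nonneg y u) (coverShare_nonneg y v)
  by_cases hc : w u v ≤ y u + y v
  · have hc' : (w u v : ℝ) ≤ y u + y v := by exact_mod_cast hc
    have hΓ : 0 ≤ 1 - 1 / (2 * (W : ℝ)) + ε / 4 := by linarith [one_div_two_mul_le_half hW]
    nlinarith [mul_nonneg hΓ hshares]
  have hsum : (βm : ℝ) * w u v ≤ swdeg H w u + swdeg H w v := by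
    exact_mod_cast hnotin u v huv fun h => hc (hcov u v h)
  have hβ' : (0 : ℝ) < β := by exact_mod_cast hβ
  have hβm' : (0 : ℝ) < βm := by exact_mod_cast hβm
  have hlt : ∀ a, (swdeg H w a : ℝ) / β - y a < W := fun a => by
    have : (swdeg H w a : ℝ) / β < W := by
      rw [div_lt_iff₀ hβ', mul_comm]
      exact_mod_cast swdeg_lt_mul hpos hdeg hle hβ (by omega) a
    linarith [(y a).cast_nonneg (α := ℝ)]
  refine le_add_mul_of_two_mul_div_le hW (by exact_mod_cast hwW) (by positivity)
    (by exact_mod_cast (by omega : y u + y v + 1 ≤ w u v))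
    ((one_le_div hβm').2 (by exact_mod_cast hββm)) hratio hε hshares ?_
  refine (two_mul_div_le_add_of_le_add (hlt u) (hlt v) ?_).trans
    (add_le_add (mul_div_le_coverShare hpos hdeg hle hcov hβ (by omega) u)
      (mul_div_le_coverShare hpos hdeg hle hcov hβ (by omega) v))
  have : (w u v : ℝ) / (β / βm) ≤ swdeg H w u / β + swdeg H w v / β := by
    rw [div_div_eq_mul_div, ← add_div]
    gcongr
    linarith
  linarith

theorem bipartite_wedcs_matching_general
    {V : Type*} [Fintype V]
    (ε : ℝ) (hε0 : 0 < ε)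
    (W : ℕ) (hW : 1 ≤ W)
    (β βm : ℕ) (hββm : βm + 2 ≤ β)
    (hratio : (β : ℝ) / βm ≤ 1 + ε / (5 * W))
    (hβm : 4 * (W : ℝ) / ε ≤ (βm : ℝ))
    (G H : SimpleGraph V) (w : V → V → ℕ)
    (hw : ValidWeights W G w)
    (hbip : ∃ A : Set V, ∀ u v, G.Adj u v → (u ∈ A ↔ v ∉ A))
    (hH : IsWEDCS G H w β βm) :
    ∃ M, IsSMatching H M ∧
      ∀ M', IsSMatching G M' →
        (smwt w M' : ℝ) ≤ (2 - 1 / (2 * W) + ε) * smwt w M := by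
  obtain ⟨A, hA⟩ := hbip
  obtain ⟨M, y, hM, hcov, hyM⟩ :=
    exists_isSMatching_sum_le_smwt hw.1 (A := A) fun u v h => hA u v (hH.1 h)
  refine ⟨M, hM, fun M' hM' => ?_⟩
  have hβm0 : 0 < βm := by exact_mod_cast (show (0 : ℝ) < 4 * W / ε by positivity).trans_le hβm
  have hΓ : 0 ≤ 1 - 1 / (2 * (W : ℝ)) + ε / 4 := by
    linarith [one_div_two_mul_le_half (show (1 : ℝ) ≤ W by exact_mod_cast hW)]
  have hy : ∑ v, (y v : ℝ) ≤ smwt w M := by exact_mod_cast hyM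
  calc (smwt w M' : ℝ) ≤ (1 + ε / 2 + (1 - 1 / (2 * W) + ε / 4)) * ∑ v, (y v : ℝ) :=
        hM'.smwt_le_mul_sum (by positivity) hΓ (fun v => (y v).cast_nonneg) (coverShare_nonneg y)
          (sum_coverShare_le hw.1 y) fun e he =>
            weight_le_of_isWEDCS hw hH hcov hβm0 (by omega) hratio hε0.le (hM'.1 e he)
    _ ≤ (2 - 1 / (2 * W) + ε) * smwt w M :=
        mul_le_mul (by linarith) hy (sum_nonneg fun v _ => (y v).cast_nonneg) (by linarith)

/-- Any `(β, β⁻)`-w-EDCS `H` of a bipartite edge-weighted graph `G`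
with integer weights in `{1,...,W}` contains a matching `M_H` with
`(2 - 1/(2W) + ε) · w(M_H) ≥ w(M_G)`, provided `β/β⁻ ≤ 1 + ε/(5W)` and `β⁻ ≥ 4W/ε`. -/
theorem bipartite_wedcs_matching
    {V : Type*} [Fintype V]
    (ε : ℝ) (hε0 : 0 < ε) (hε1 : ε < 1/2)
    (W : ℕ) (hW : 1 ≤ W)
    (β βm : ℕ) (hβ3 : 3 ≤ β) (hββm : βm + 2 ≤ β)
    (hratio : (β : ℝ) / βm ≤ 1 + ε / (5 * W))
    (hβm : 4 * (W : ℝ) / ε ≤ (βm : ℝ))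
    (G H : SimpleGraph V) (w : V → V → ℕ)
    (hw : ValidWeights W G w)
    (hbip : ∃ A : Set V, ∀ u v, G.Adj u v → (u ∈ A ↔ v ∉ A))
    (hH : IsWEDCS G H w β βm) :
    ∃ M, IsSMatching H M ∧
      ∀ M', IsSMatching G M' →
        (smwt w M' : ℝ) ≤ (2 - 1 / (2 * W) + ε) * smwt w M :=
  bipartite_wedcs_matching_general ε hε0 W hW β βm hββm hratio hβm G H w hw hbip hH
end

section
/- Let H be a (β, β⁻)-w-b-EDCS of a weighted multigraph G with capacities {b_v}, and let M_G be a maximum-weight b-matching of G, with |M_G| denoting its number of edges. Then H contains at most 2β·|M_G| edges (counted with multiplicity). -/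
open scoped Classical

/-- A weighted multigraph edge: two endpoints and an integer weight. -/
abbrev MEdge (V : Type*) := V × V × ℕ

variable {V : Type*}

/-- Weight of an edge. -/
def ewt (e : MEdge V) : ℕ := e.2.2

/-- Degree of a vertex in a multiset of edges: number of incident edges. -/
noncomputable def mdeg (H : Multiset (MEdge V)) (v : V) : ℕ :=
  (H.filter (fun e => e.1 = v ∨ e.2.1 = v)).card

/-- Weighted degree of a vertex in a multiset of edges. -/
noncomputable def mwdeg (H : Multiset (MEdge V)) (v : V) : ℕ :=
  ((H.filter (fun e => e.1 = v ∨ e.2.1 = v)).map ewt).sum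

/-- Total weight of a multiset of edges. -/
def mwt (M : Multiset (MEdge V)) : ℕ := (M.map ewt).sum

/-- A multiset of edges is valid (for weight bound `W`): no self-loops and
integer weights in `{1, ..., W}`. -/
def ValidEdges (W : ℕ) (E : Multiset (MEdge V)) : Prop :=
  ∀ e ∈ E, e.1 ≠ e.2.1 ∧ 1 ≤ ewt e ∧ ewt e ≤ W

/-- The multiset of parallel edges between `u` and `v`. -/
noncomputable def par (E : Multiset (MEdge V)) (u v : V) : Multiset (MEdge V) :=
  E.filter (fun e => (e.1 = u ∧ e.2.1 = v) ∨ (e.1 = v ∧ e.2.1 = u))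

/-- `M` is a `b`-matching contained in the (multi-)graph `E`. -/
def IsBMatching (E M : Multiset (MEdge V)) (b : V → ℕ) : Prop :=
  M ≤ E ∧ ∀ v, mdeg M v ≤ b v

/-- `H` is a `(β, βm)`-w-b-EDCS of the multigraph `E` with capacities `b`. -/
def IsWBEDCS (E H : Multiset (MEdge V)) (b : V → ℕ) (β βm : ℕ) : Prop :=
  H ≤ E ∧
  (∀ e ∈ H,
    (mwdeg H e.1 : ℝ) / (b e.1) + (mwdeg H e.2.1 : ℝ) / (b e.2.1) ≤ (β : ℝ) * ewt e) ∧
  (∀ e ∈ E - H,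
    (βm : ℝ) * ewt e ≤ (mwdeg H e.1 : ℝ) / (b e.1) + (mwdeg H e.2.1 : ℝ) / (b e.2.1))

lemma mdeg_cons (a : MEdge V) (t : Multiset (MEdge V)) (v : V) :
    mdeg (a ::ₘ t) v = mdeg t v + (if a.1 = v ∨ a.2.1 = v then 1 else 0) := by
  simp only [mdeg, Multiset.filter_cons]
  split <;> simp [add_comm]

lemma mdeg_mono {A B : Multiset (MEdge V)} (h : A ≤ B) (v : V) : mdeg A v ≤ mdeg B v :=
  Multiset.card_le_card (Multiset.filter_le_filter _ h)

lemma handshake [Fintype V] (M : Multiset (MEdge V)) (h : ∀ a ∈ M, a.1 ≠ a.2.1) :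
    ∑ v : V, mdeg M v = 2 * Multiset.card M := by
  induction M using Multiset.induction with
  | empty => simp [mdeg]
  | cons a t ih =>
    have ha : a.1 ≠ a.2.1 := h a (Multiset.mem_cons_self a t)
    have ih' := ih (fun x hx => h x (Multiset.mem_cons_of_mem hx))
    simp only [mdeg_cons, Finset.sum_add_distrib, ih', Multiset.card_cons]
    have h2 : ∑ v : V, (if a.1 = v ∨ a.2.1 = v then 1 else 0) = 2 := by
      rw [Finset.sum_boole]
      have h3 : Finset.univ.filter (fun v => a.1 = v ∨ a.2.1 = v) = {a.1, a.2.1} := by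
        ext v; simp [eq_comm]
      rw [h3]
      simp [Finset.card_insert_of_notMem, ha]
    rw [h2]; ring

lemma card_le_sum_mdeg [Fintype V] (S : Finset V) (T : Multiset (MEdge V))
    (h : ∀ a ∈ T, a.1 ∈ S ∨ a.2.1 ∈ S) :
    Multiset.card T ≤ ∑ v ∈ S, mdeg T v := by
  induction T using Multiset.induction with
  | empty => simp [mdeg]
  | cons a t ih =>
    have ih' := ih (fun x hx => h x (Multiset.mem_cons_of_mem hx))
    simp only [mdeg_cons, Finset.sum_add_distrib, Multiset.card_cons]
    have h1 : 1 ≤ ∑ v ∈ S, (if a.1 = v ∨ a.2.1 = v then 1 else 0) := by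
      rcases h a (Multiset.mem_cons_self a t) with hv | hv
      · calc 1 = (if a.1 = a.1 ∨ a.2.1 = a.1 then 1 else 0) := by simp
          _ ≤ _ := Finset.single_le_sum (f := fun v => if a.1 = v ∨ a.2.1 = v then 1 else 0)
              (fun i _ => by positivity) hv
      · calc 1 = (if a.1 = a.2.1 ∨ a.2.1 = a.2.1 then 1 else 0) := by simp
          _ ≤ _ := Finset.single_le_sum (f := fun v => if a.1 = v ∨ a.2.1 = v then 1 else 0)
              (fun i _ => by positivity) hv
    omega

/-- A `(β, β⁻)`-w-b-EDCS `H` of a weighted multigraph `G` contains at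
most `2β·|M_G|` edges (with multiplicity), where `M_G` is a maximum-weight `b`-matching. -/
theorem wbedcs_size_bound
    {V : Type*} [Fintype V]
    (W β βm : ℕ) (hβ3 : 3 ≤ β) (hββm : βm + 2 ≤ β)
    (E : Multiset (MEdge V)) (hE : ValidEdges W E)
    (b : V → ℕ) (hb : ∀ v, 1 ≤ b v)
    (H : Multiset (MEdge V)) (hH : IsWBEDCS E H b β βm)
    (M : Multiset (MEdge V)) (hM : IsBMatching E M b)
    (hmax : ∀ M', IsBMatching E M' b → mwt M' ≤ mwt M) :
    Multiset.card H ≤ 2 * β * Multiset.card M := by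
  obtain ⟨hHE, hedcs, _⟩ := hH
  obtain ⟨hME, hMdeg⟩ := hM
  -- Lemma A: mdeg H v ≤ β * b v
  have degH : ∀ v, mdeg H v ≤ β * b v := by
    intro v
    set F := H.filter (fun e : MEdge V => e.1 = v ∨ e.2.1 = v) with hF
    rcases eq_or_ne F 0 with h0 | h0
    · simp [mdeg, ← hF, h0]
    · have hne : F.toFinset.Nonempty := by
        rw [Finset.nonempty_iff_ne_empty]
        simp [Multiset.toFinset_eq_empty, h0]
      obtain ⟨e, heF, hemin⟩ := F.toFinset.exists_min_image ewt hne
      have heF' : e ∈ F := Multiset.mem_toFinset.mp heF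
      have heH : e ∈ H := Multiset.mem_of_mem_filter heF'
      have hev : e.1 = v ∨ e.2.1 = v := (Multiset.mem_filter.mp heF').2
      have hew : 1 ≤ ewt e := (hE e (Multiset.mem_of_le hHE heH)).2.1
      -- mdeg H v * ewt e ≤ mwdeg H v
      have h1 : mdeg H v * ewt e ≤ mwdeg H v := by
        have : Multiset.card (F.map ewt) • ewt e ≤ (F.map ewt).sum := by
          apply Multiset.card_nsmul_le_sum
          intro x hx
          obtain ⟨y, hy, rfl⟩ := Multiset.mem_map.mp hx
          exact hemin y (Multiset.mem_toFinset.mpr hy)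
        simpa [mdeg, mwdeg, ← hF, smul_eq_mul] using this
      -- mwdeg H v ≤ β * ewt e * b v
      have h2 : mwdeg H v ≤ β * ewt e * b v := by
        have hed := hedcs e heH
        have hb1 : (0:ℝ) < b e.1 := by exact_mod_cast hb e.1
        have hb2 : (0:ℝ) < b e.2.1 := by exact_mod_cast hb e.2.1
        have hnn1 : (0:ℝ) ≤ (mwdeg H e.1 : ℝ) / (b e.1) := by positivity
        have hnn2 : (0:ℝ) ≤ (mwdeg H e.2.1 : ℝ) / (b e.2.1) := by positivity
        have key : (mwdeg H v : ℝ) / (b v) ≤ (β : ℝ) * ewt e := by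
          rcases hev with h | h <;> rw [← h] <;> linarith
        have hbv : (0:ℝ) < b v := by exact_mod_cast hb v
        rw [div_le_iff₀ hbv] at key
        have : (mwdeg H v : ℝ) ≤ ((β * ewt e * b v : ℕ) : ℝ) := by push_cast; linarith
        exact_mod_cast this
      have := le_trans h1 h2
      have hrw : β * ewt e * b v = (β * b v) * ewt e := by ring
      rw [hrw] at this
      exact Nat.le_of_mul_le_mul_right this hew
  -- Lemma B: saturation
  have sat : ∀ a ∈ E, M.count a < E.count a →
      mdeg M a.1 = b a.1 ∨ mdeg M a.2.1 = b a.2.1 := by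
    intro a haE hcount
    by_contra hcon
    push_neg at hcon
    obtain ⟨h1, h2⟩ := hcon
    have hd1 : mdeg M a.1 < b a.1 := lt_of_le_of_ne (hMdeg a.1) h1
    have hd2 : mdeg M a.2.1 < b a.2.1 := lt_of_le_of_ne (hMdeg a.2.1) h2
    have hM' : IsBMatching E (a ::ₘ M) b := by
      constructor
      · rw [Multiset.le_iff_count]
        intro x
        rw [Multiset.count_cons]
        by_cases hxa : x = a
        · subst hxa; simpa using hcount
        · simp [hxa, Multiset.le_iff_count.mp hME x]
      · intro v
        rw [mdeg_cons]
        split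
        · rename_i hv
          rcases hv with h | h <;> subst h <;> omega
        · simpa using hMdeg v
    have hwa : 1 ≤ ewt a := (hE a haE).2.1
    have := hmax (a ::ₘ M) hM'
    simp only [mwt, Multiset.map_cons, Multiset.sum_cons] at this
    omega
  classical
  set p : MEdge V → Prop := fun a => mdeg M a.1 = b a.1 ∨ mdeg M a.2.1 = b a.2.1 with hp
  set H₁ := H.filter p with hH₁
  set H₂ := H.filter (fun a => ¬ p a) with hH₂
  have hsplit : Multiset.card H₁ + Multiset.card H₂ = Multiset.card H := by
    rw [← Multiset.card_add, Multiset.filter_add_not]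
  set S : Finset V := Finset.univ.filter (fun v => mdeg M v = b v) with hS
  -- H₂ ≤ M
  have hH₂M : H₂ ≤ M := by
    rw [Multiset.le_iff_count]
    intro a
    by_cases ha : a ∈ H₂
    · have haH : a ∈ H := Multiset.mem_of_mem_filter ha
      have hnp : ¬ p a := (Multiset.mem_filter.mp ha).2
      have haE : a ∈ E := Multiset.mem_of_le hHE haH
      have : ¬ (M.count a < E.count a) := fun hc => hnp (sat a haE hc)
      have hME' : E.count a ≤ M.count a := le_of_not_gt this
      calc H₂.count a ≤ H.count a := Multiset.count_le_of_le a (Multiset.filter_le _ H)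
        _ ≤ E.count a := Multiset.count_le_of_le a hHE
        _ ≤ M.count a := hME'
    · simp [Multiset.count_eq_zero_of_notMem ha]
  -- edges of H₂ avoid S
  have hH₂S : ∀ v ∈ S, mdeg H₂ v = 0 := by
    intro v hv
    have hvS : mdeg M v = b v := (Finset.mem_filter.mp hv).2
    rw [mdeg, Multiset.card_eq_zero, Multiset.filter_eq_nil]
    intro a ha hav
    have hnp : ¬ p a := (Multiset.mem_filter.mp ha).2
    apply hnp
    rcases hav with h | h
    · left; rw [h]; exact hvS
    · right; rw [h]; exact hvS
  have noloopM : ∀ a ∈ M, a.1 ≠ a.2.1 := fun a ha => (hE a (Multiset.mem_of_le hME ha)).1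
  have noloopH₂ : ∀ a ∈ H₂, a.1 ≠ a.2.1 := fun a ha => noloopM a (Multiset.mem_of_le hH₂M ha)
  -- handshake facts
  have hsM : ∑ v : V, mdeg M v = 2 * Multiset.card M := handshake M noloopM
  have hsH₂ : ∑ v : V, mdeg H₂ v = 2 * Multiset.card H₂ := handshake H₂ noloopH₂
  -- bound on card H₁
  have hb1 : Multiset.card H₁ ≤ β * ∑ v ∈ S, b v := by
    calc Multiset.card H₁ ≤ ∑ v ∈ S, mdeg H₁ v := by
          apply card_le_sum_mdeg
          intro a ha
          have hpa : p a := (Multiset.mem_filter.mp ha).2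
          rcases hpa with h | h
          · left; exact Finset.mem_filter.mpr ⟨Finset.mem_univ _, h⟩
          · right; exact Finset.mem_filter.mpr ⟨Finset.mem_univ _, h⟩
      _ ≤ ∑ v ∈ S, mdeg H v := Finset.sum_le_sum (fun v _ => mdeg_mono (Multiset.filter_le _ H) v)
      _ ≤ ∑ v ∈ S, β * b v := Finset.sum_le_sum (fun v _ => degH v)
      _ = β * ∑ v ∈ S, b v := by rw [Finset.mul_sum]
  -- 2 card M ≥ ∑_S b + 2 card H₂
  have hb2 : ∑ v ∈ S, b v + 2 * Multiset.card H₂ ≤ 2 * Multiset.card M := by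
    have hsplitV : ∑ v : V, mdeg M v = ∑ v ∈ S, mdeg M v + ∑ v ∈ Sᶜ, mdeg M v := by
      rw [Finset.sum_add_sum_compl]
    have h1 : ∑ v ∈ S, mdeg M v = ∑ v ∈ S, b v :=
      Finset.sum_congr rfl (fun v hv => (Finset.mem_filter.mp hv).2)
    have h2 : ∑ v ∈ Sᶜ, mdeg H₂ v ≤ ∑ v ∈ Sᶜ, mdeg M v :=
      Finset.sum_le_sum (fun v _ => mdeg_mono hH₂M v)
    have h3 : ∑ v ∈ Sᶜ, mdeg H₂ v = 2 * Multiset.card H₂ := by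
      rw [← hsH₂, ← Finset.sum_add_sum_compl S (mdeg H₂)]
      rw [Finset.sum_congr rfl hH₂S]
      simp
    omega
  have hfin : Multiset.card H₂ ≤ 2 * β * Multiset.card H₂ := by nlinarith
  nlinarith [hb1, hb2, hsplit, hβ3]
end

section
/- Every weighted multigraph G = (V,E) with integer edge weights in {1,...,W}, together with any set of integer capacities {b_v}_{v∈V}, contains a (β, β⁻)-w-b-EDCS, for any integer parameters β ≥ 3 and β⁻ with β ≥ β⁻ + 2. -/
open scoped Classical

variable {V : Type*}

/-- The potential function. -/
noncomputable def phi [Fintype V] (b : V → ℕ) (β : ℕ) (H : Multiset (MEdge V)) : ℝ :=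
  (2 * (β : ℝ) - 2) * ((H.map (fun e => (ewt e : ℝ) ^ 2)).sum)
    - ∑ v, (mwdeg H v : ℝ) ^ 2 / (b v : ℝ)

lemma mwdeg_cons (e : MEdge V) (H : Multiset (MEdge V)) (x : V) :
    mwdeg (e ::ₘ H) x = (if e.1 = x ∨ e.2.1 = x then ewt e else 0) + mwdeg H x := by
  unfold mwdeg
  rw [Multiset.filter_cons]
  split <;> simp

lemma phi_cons [Fintype V] (b : V → ℕ) (β : ℕ) (H : Multiset (MEdge V))
    (e : MEdge V) (hne : e.1 ≠ e.2.1) (hb : ∀ v, 1 ≤ b v) :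
    phi b β (e ::ₘ H) = phi b β H + (2 * (β : ℝ) - 2) * ((ewt e : ℝ)) ^ 2
      - (2 * (mwdeg H e.1 : ℝ) * (ewt e : ℝ) + (ewt e : ℝ) ^ 2) / (b e.1 : ℝ)
      - (2 * (mwdeg H e.2.1 : ℝ) * (ewt e : ℝ) + (ewt e : ℝ) ^ 2) / (b e.2.1 : ℝ) := by
  have hbne : ∀ v, ((b v : ℝ)) ≠ 0 := fun v => by
    have := hb v; positivity
  have hdiff : ∀ x, ((mwdeg (e ::ₘ H) x : ℝ)) ^ 2 / (b x : ℝ)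
      = (mwdeg H x : ℝ) ^ 2 / (b x : ℝ)
        + (if x = e.1 then (2 * (mwdeg H e.1 : ℝ) * (ewt e : ℝ) + (ewt e : ℝ) ^ 2) / (b e.1 : ℝ) else 0)
        + (if x = e.2.1 then (2 * (mwdeg H e.2.1 : ℝ) * (ewt e : ℝ) + (ewt e : ℝ) ^ 2) / (b e.2.1 : ℝ) else 0) := by
    intro x
    rw [mwdeg_cons]
    by_cases h1 : x = e.1
    · subst h1
      rw [if_pos (Or.inl rfl), if_pos rfl, if_neg hne]
      push_cast
      field_simp
      ring
    · by_cases h2 : x = e.2.1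
      · subst h2
        rw [if_pos (Or.inr rfl), if_neg h1, if_pos rfl]
        push_cast
        field_simp
        ring
      · rw [if_neg, if_neg h1, if_neg h2]
        · simp
        · push_neg
          exact ⟨fun h => h1 h.symm, fun h => h2 h.symm⟩
  unfold phi
  rw [Multiset.map_cons, Multiset.sum_cons]
  have hsum : ∑ v, (mwdeg (e ::ₘ H) v : ℝ) ^ 2 / (b v : ℝ)
      = (∑ v, (mwdeg H v : ℝ) ^ 2 / (b v : ℝ))
        + (2 * (mwdeg H e.1 : ℝ) * (ewt e : ℝ) + (ewt e : ℝ) ^ 2) / (b e.1 : ℝ)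
        + (2 * (mwdeg H e.2.1 : ℝ) * (ewt e : ℝ) + (ewt e : ℝ) ^ 2) / (b e.2.1 : ℝ) := by
    simp only [hdiff, Finset.sum_add_distrib, Finset.sum_ite_eq' Finset.univ,
      Finset.mem_univ, if_true]
  rw [hsum]
  ring

set_option maxHeartbeats 1000000 in
/-- Every weighted multigraph with integer edge weights in `{1,...,W}`
and any integer capacities contains a `(β, β⁻)`-w-b-EDCS, for any integers `β ≥ 3`
and `β⁻` with `β ≥ β⁻ + 2`. -/
theorem wbedcs_exists
    {V : Type*} [Fintype V]
    (W β βm : ℕ) (hW : 1 ≤ W) (hβ3 : 3 ≤ β) (hββm : βm + 2 ≤ β)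
    (E : Multiset (MEdge V)) (hE : ValidEdges W E)
    (b : V → ℕ) (hb : ∀ v, 1 ≤ b v) :
    ∃ H : Multiset (MEdge V), IsWBEDCS E H b β βm := by
  obtain ⟨H, hHmem, hHmax⟩ := Finset.exists_max_image E.powerset.toFinset (phi b β)
    ⟨0, by simp⟩
  have hHle : H ≤ E := by
    rw [Multiset.mem_toFinset, Multiset.mem_powerset] at hHmem
    exact hHmem
  have hmax : ∀ H' ≤ E, phi b β H' ≤ phi b β H := by
    intro H' h
    exact hHmax H' (by rw [Multiset.mem_toFinset, Multiset.mem_powerset]; exact h)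
  refine ⟨H, hHle, ?_, ?_⟩
  · -- upper bound on edges in H
    intro e heH
    by_contra hlt
    push_neg at hlt
    obtain ⟨hne, hw1, -⟩ := hE e (Multiset.mem_of_le hHle heH)
    set H' := H.erase e with hH'
    have hcons : e ::ₘ H' = H := Multiset.cons_erase heH
    have hH'le : H' ≤ E := le_trans (Multiset.erase_le e H) hHle
    have hphi : phi b β H = phi b β H' + (2 * (β : ℝ) - 2) * ((ewt e : ℝ)) ^ 2
        - (2 * (mwdeg H' e.1 : ℝ) * (ewt e : ℝ) + (ewt e : ℝ) ^ 2) / (b e.1 : ℝ)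
        - (2 * (mwdeg H' e.2.1 : ℝ) * (ewt e : ℝ) + (ewt e : ℝ) ^ 2) / (b e.2.1 : ℝ) := by
      rw [← hcons]; exact phi_cons b β H' e hne hb
    have hd1 : (mwdeg H e.1 : ℝ) = (mwdeg H' e.1 : ℝ) + (ewt e : ℝ) := by
      rw [← hcons, mwdeg_cons, if_pos (Or.inl rfl)]; push_cast; ring
    have hd2 : (mwdeg H e.2.1 : ℝ) = (mwdeg H' e.2.1 : ℝ) + (ewt e : ℝ) := by
      rw [← hcons, mwdeg_cons, if_pos (Or.inr rfl)]; push_cast; ring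
    have hmaxH' := hmax H' hH'le
    rw [hd1, hd2] at hlt
    have hbu : (1:ℝ) ≤ (b e.1 : ℝ) := by exact_mod_cast hb e.1
    have hbv : (1:ℝ) ≤ (b e.2.1 : ℝ) := by exact_mod_cast hb e.2.1
    have hmu : (0:ℝ) ≤ (mwdeg H' e.1 : ℝ) := by positivity
    have hmv : (0:ℝ) ≤ (mwdeg H' e.2.1 : ℝ) := by positivity
    have hw : (1:ℝ) ≤ (ewt e : ℝ) := by exact_mod_cast hw1
    have hβ : (3:ℝ) ≤ (β:ℝ) := by exact_mod_cast hβ3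
    set w : ℝ := (ewt e : ℝ)
    set mu : ℝ := (mwdeg H' e.1 : ℝ)
    set mv : ℝ := (mwdeg H' e.2.1 : ℝ)
    set bu : ℝ := (b e.1 : ℝ)
    set bv : ℝ := (b e.2.1 : ℝ)
    have hbu0 : (0:ℝ) < bu := by linarith
    have hbv0 : (0:ℝ) < bv := by linarith
    have hcl : (β:ℝ) * w * (bu * bv) < (mu + w) * bv + (mv + w) * bu := by
      rw [div_add_div _ _ (ne_of_gt hbu0) (ne_of_gt hbv0),
        lt_div_iff₀ (by positivity)] at hlt
      nlinarith [hlt]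
    have hkey : phi b β H < phi b β H' := by
      rw [hphi]
      have hsum : (2 * mu * w + w ^ 2) / bu + (2 * mv * w + w ^ 2) / bv
          = ((2 * mu * w + w ^ 2) * bv + bu * (2 * mv * w + w ^ 2)) / (bu * bv) :=
        div_add_div _ _ (ne_of_gt hbu0) (ne_of_gt hbv0)
      have h3 : (2 * (β:ℝ) - 2) * w ^ 2
          < (2 * mu * w + w ^ 2) / bu + (2 * mv * w + w ^ 2) / bv := by
        rw [hsum, lt_div_iff₀ (by positivity)]
        nlinarith [mul_lt_mul_of_pos_left hcl (show (0:ℝ) < 2 * w by linarith),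
          mul_nonneg (mul_nonneg (sq_nonneg w) (le_of_lt hbu0)) (sub_nonneg.mpr hbv),
          mul_nonneg (mul_nonneg (sq_nonneg w) (le_of_lt hbv0)) (sub_nonneg.mpr hbu)]
      linarith
    linarith [hmaxH']
  · -- lower bound on edges in E - H
    intro e heEH
    by_contra hlt
    push_neg at hlt
    have heE : e ∈ E := Multiset.mem_of_le (Multiset.sub_le_self E H) heEH
    obtain ⟨hne, hw1, -⟩ := hE e heE
    have hcount : H.count e + 1 ≤ E.count e := by
      have h1 : 1 ≤ (E - H).count e := Multiset.one_le_count_iff_mem.mpr heEH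
      rw [Multiset.count_sub] at h1
      omega
    have hconsle : e ::ₘ H ≤ E := by
      rw [Multiset.le_iff_count]
      intro a
      by_cases ha : a = e
      · subst ha
        rw [Multiset.count_cons_self]
        exact hcount
      · rw [Multiset.count_cons_of_ne ha]
        exact Multiset.le_iff_count.mp hHle a
    have hmaxH' := hmax (e ::ₘ H) hconsle
    have hphi := phi_cons b β H e hne hb
    have hbu : (1:ℝ) ≤ (b e.1 : ℝ) := by exact_mod_cast hb e.1
    have hbv : (1:ℝ) ≤ (b e.2.1 : ℝ) := by exact_mod_cast hb e.2.1
    have hmu : (0:ℝ) ≤ (mwdeg H e.1 : ℝ) := by positivity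
    have hmv : (0:ℝ) ≤ (mwdeg H e.2.1 : ℝ) := by positivity
    have hw : (1:ℝ) ≤ (ewt e : ℝ) := by exact_mod_cast hw1
    have hβ : (3:ℝ) ≤ (β:ℝ) := by exact_mod_cast hβ3
    have hβm : (βm:ℝ) + 2 ≤ (β:ℝ) := by exact_mod_cast hββm
    set w : ℝ := (ewt e : ℝ)
    set mu : ℝ := (mwdeg H e.1 : ℝ)
    set mv : ℝ := (mwdeg H e.2.1 : ℝ)
    set bu : ℝ := (b e.1 : ℝ)
    set bv : ℝ := (b e.2.1 : ℝ)
    have hbu0 : (0:ℝ) < bu := by linarith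
    have hbv0 : (0:ℝ) < bv := by linarith
    have hlt' : mu / bu + mv / bv < ((β:ℝ) - 2) * w := by
      calc mu / bu + mv / bv < (βm:ℝ) * w := hlt
        _ ≤ ((β:ℝ) - 2) * w := by nlinarith [Nat.cast_nonneg (α := ℝ) βm]
    have hcl : mu * bv + bu * mv < ((β:ℝ) - 2) * w * (bu * bv) := by
      rw [div_add_div _ _ (ne_of_gt hbu0) (ne_of_gt hbv0),
        div_lt_iff₀ (by positivity)] at hlt'
      nlinarith [hlt']
    have hkey : phi b β H < phi b β (e ::ₘ H) := by
      rw [hphi]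
      have hsum : (2 * mu * w + w ^ 2) / bu + (2 * mv * w + w ^ 2) / bv
          = ((2 * mu * w + w ^ 2) * bv + bu * (2 * mv * w + w ^ 2)) / (bu * bv) :=
        div_add_div _ _ (ne_of_gt hbu0) (ne_of_gt hbv0)
      have h3 : (2 * mu * w + w ^ 2) / bu + (2 * mv * w + w ^ 2) / bv
          < (2 * (β:ℝ) - 2) * w ^ 2 := by
        rw [hsum, div_lt_iff₀ (by positivity)]
        nlinarith [mul_lt_mul_of_pos_left hcl (show (0:ℝ) < 2 * w by linarith),
          mul_nonneg (mul_nonneg (sq_nonneg w) (le_of_lt hbu0)) (sub_nonneg.mpr hbv),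
          mul_nonneg (mul_nonneg (sq_nonneg w) (le_of_lt hbv0)) (sub_nonneg.mpr hbu)]
      linarith
    linarith [hmaxH']
end

section
/- Let b ≥ 1 and W ≥ 1 be integers. Let U be a finite index set and, for each u ∈ U, let S_u be a finite multiset of at most b integer weights, each in {1,...,W}; let S be the disjoint union of the S_u. Let M ⊆ S be a sub-multiset with |M| ≤ b such that, within each group S_u, the elements of M ∩ S_u are the heaviest elements of S_u. Then S can be partitioned into b (possibly empty) multisets E_1, ..., E_b such that: (i) each E_i contains at most one element of M; (ii) each E_i contains at most one element from each group S_u; and (iii) for all i, j, the total weights of E_i and E_j differ by at most 2W. Consequently, writing σ for the total weight of S, each E_i has total weight in the interval [σ/b − 2W, σ/b + 2W]. -/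
/-!
Put the elements of `M` first and the others after them in order of decreasing weight, and cut
this sequence into consecutive blocks of `b`. Blocks and groups are the two sides of a bipartite
multigraph of maximum degree `b` whose edges are the elements. By König's edge-colouring theorem
(a `b`-regular completion splits into `b` perfect matchings by Hall's theorem) the elements can
be coloured with `b` colours without repeating a colour in a block or a group. A colour class
then has at most one element in each block, hence at most one of `M`, and exactly one in every
block that is followed by another. Matching the element a class takes from block `t + 1` with
the (at least as heavy) element another class takes from block `t` leaves only the elements
from blocks `0` and `1` unmatched, so class totals differ by at most `2W`.
-/

open scoped Classical

open Finset

namespace Matrix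

variable {n : Type*} [Fintype n]

theorem exists_perm_pos_of_sum_eq {k : ℕ} (hk : 0 < k) (N : Matrix n n ℕ)
    (hrow : ∀ i, ∑ j, N i j = k) (hcol : ∀ j, ∑ i, N i j = k) :
    ∃ σ : Equiv.Perm n, ∀ i, 0 < N i (σ i) := by
  let support (i : n) : Finset n := {j | 0 < N i j}
  have hall (A : Finset n) : #A ≤ #(A.biUnion support) := by
    have hrow' : ∀ i ∈ A, ∑ j ∈ A.biUnion support, N i j = k := fun i hi => by
      refine (sum_subset (subset_univ _) fun j _ hj => ?_).trans (hrow i)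
      exact Nat.eq_zero_of_not_pos fun h => hj (mem_biUnion.2 ⟨i, hi, by simpa [support] using h⟩)
    refine Nat.le_of_mul_le_mul_left ?_ hk
    calc k * #A = ∑ i ∈ A, ∑ j ∈ A.biUnion support, N i j := by
          rw [sum_congr rfl hrow', sum_const, smul_eq_mul, mul_comm]
      _ = ∑ j ∈ A.biUnion support, ∑ i ∈ A, N i j := sum_comm
      _ ≤ ∑ j ∈ A.biUnion support, ∑ i, N i j := by gcongr; exact subset_univ _
      _ = k * #(A.biUnion support) := by simp [hcol, mul_comm]
  obtain ⟨σ, hinj, hσ⟩ := (all_card_le_biUnion_card_iff_exists_injective support).1 hall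
  exact ⟨Equiv.ofBijective σ (Finite.injective_iff_bijective.1 hinj), fun i => by
    simpa [support] using hσ i⟩

theorem exists_perms_card_eq_of_sum_eq (k : ℕ) (N : Matrix n n ℕ)
    (hrow : ∀ i, ∑ j, N i j = k) (hcol : ∀ j, ∑ i, N i j = k) :
    ∃ F : Fin k → Equiv.Perm n, ∀ i j, #{m | F m i = j} = N i j := by
  induction k generalizing N with
  | zero =>
    refine ⟨Fin.elim0, fun i j => ?_⟩
    have := hrow i ▸ single_le_sum (fun j _ => Nat.zero_le (N i j)) (mem_univ j)
    simp_all
  | succ k ih =>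
    obtain ⟨σ, hσ⟩ := exists_perm_pos_of_sum_eq k.succ_pos N hrow hcol
    set N' : Matrix n n ℕ := fun i j => N i j - if σ i = j then 1 else 0
    have hN : ∀ i j, N i j = N' i j + if σ i = j then 1 else 0 := fun i j => by
      by_cases h : σ i = j
      · subst h
        have := hσ i
        simp only [N', if_true]
        omega
      · simp [N', h]
    have hrow' : ∀ i, ∑ j, N' i j = k := fun i => by
      have := hrow i
      simp only [hN, sum_add_distrib, sum_ite_eq, mem_univ, if_true] at this
      omega
    have hcol' : ∀ j, ∑ i, N' i j = k := fun j => by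
      have := hcol j
      simp only [hN, sum_add_distrib, ← Equiv.eq_symm_apply, sum_ite_eq', mem_univ,
        if_true] at this
      omega
    obtain ⟨F, hF⟩ := ih N' hrow' hcol'
    refine ⟨Fin.cons σ F, fun i j => ?_⟩
    rw [Fin.card_filter_univ_succ, hN]
    simp only [Fin.cons_zero, Fin.cons_succ, hF]
    split_ifs <;> simp

variable {ρ σ : Type*} [Fintype ρ] [Fintype σ]

theorem exists_extension_sum_eq {b : ℕ} (N : Matrix ρ σ ℕ) (hrow : ∀ r, ∑ c, N r c ≤ b)
    (hcol : ∀ c, ∑ r, N r c ≤ b) :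
    ∃ P : Matrix (ρ ⊕ σ) (ρ ⊕ σ) ℕ, (∀ i, ∑ j, P i j = b) ∧ (∀ j, ∑ i, P i j = b) ∧
      ∀ r c, P (.inl r) (.inr c) = N r c := by
  refine ⟨fromBlocks (diagonal fun r => b - ∑ c, N r c) N Nᵀ (diagonal fun c => b - ∑ r, N r c),
    ?_, ?_, fun r c => rfl⟩
  · rintro (r | c)
    · simp [Fintype.sum_sum_type, diagonal_apply, hrow r]
    · simp [Fintype.sum_sum_type, diagonal_apply, hcol c]
  · rintro (r | c)
    · simp [Fintype.sum_sum_type, diagonal_apply, hrow r]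
    · simp [Fintype.sum_sum_type, diagonal_apply, hcol c]

end Matrix

theorem exists_coloring_injective_on_fibers_of_fintype {α ρ σ : Type*} [Fintype α] [Fintype ρ]
    [Fintype σ] (b : ℕ) (B : α → ρ) (G : α → σ) (hB : ∀ r, #{a | B a = r} ≤ b)
    (hG : ∀ c, #{a | G a = c} ≤ b) :
    ∃ f : α → Fin b, (∀ a a', B a = B a' → f a = f a' → a = a') ∧
      (∀ a a', G a = G a' → f a = f a' → a = a') := by
  let N : Matrix ρ σ ℕ := fun r c => #{a | B a = r ∧ G a = c}
  have hrow : ∀ r, ∑ c, N r c = #{a | B a = r} := fun r => by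
    rw [card_eq_sum_card_fiberwise (f := G) (t := univ) (fun a _ => mem_univ _)]
    simp only [N, filter_filter]
  have hcol : ∀ c, ∑ r, N r c = #{a | G a = c} := fun c => by
    rw [card_eq_sum_card_fiberwise (f := B) (t := univ) (fun a _ => mem_univ _)]
    simp only [N, filter_filter, and_comm]
  obtain ⟨P, hProw, hPcol, hPN⟩ := N.exists_extension_sum_eq
    (fun r => (hrow r).trans_le (hB r)) fun c => (hcol c).trans_le (hG c)
  obtain ⟨F, hF⟩ := P.exists_perms_card_eq_of_sum_eq b hProw hPcol
  -- the elements of the cell `(r, c)` get distinct colours `m` for which `F m` matches `r` to `c`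
  have hcell (r : ρ) (c : σ) :
      Nonempty ({a // B a = r ∧ G a = c} ↪ {m // F m (.inl r) = .inr c}) :=
    Function.Embedding.nonempty_of_card_le <| by
      rw [Fintype.card_subtype, Fintype.card_subtype]
      exact (hPN r c).symm.trans_le (by convert Nat.le_of_eq (hF (.inl r) (.inr c)).symm)
  let e (r : ρ) (c : σ) := (hcell r c).some
  let f (a : α) : Fin b := e (B a) (G a) ⟨a, rfl, rfl⟩
  have hf (r : ρ) (c : σ) (x : {a // B a = r ∧ G a = c}) : f x = e r c x := by
    obtain ⟨a, rfl, rfl⟩ := x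
    rfl
  have hsame (a a' : α) (hB : B a = B a') (hG : G a = G a') (h : f a = f a') : a = a' := by
    have := hf (B a) (G a) ⟨a', hB.symm, hG.symm⟩
    exact congrArg Subtype.val ((e (B a) (G a)).injective (Subtype.ext (h.trans this)))
  have hmatch (a : α) : F (f a) (.inl (B a)) = .inr (G a) := (e (B a) (G a) ⟨a, rfl, rfl⟩).2
  refine ⟨f, fun a a' hB h => hsame a a' hB ?_ h, fun a a' hG h => hsame a a' ?_ hG h⟩
  · have := hmatch a'
    rw [← h, ← hB, hmatch a] at this
    exact Sum.inr_injective this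
  · have := hmatch a'
    rw [← h, ← hG, ← hmatch a] at this
    exact Sum.inl_injective ((F (f a)).injective this).symm

theorem exists_coloring_injective_on_fibers {α ρ σ : Type*} [Fintype α] (b : ℕ) (B : α → ρ)
    (G : α → σ) (hB : ∀ r, #{a | B a = r} ≤ b) (hG : ∀ c, #{a | G a = c} ≤ b) :
    ∃ f : α → Fin b, (∀ a a', B a = B a' → f a = f a' → a = a') ∧
      (∀ a a', G a = G a' → f a = f a' → a = a') := by
  obtain ⟨f, hfB, hfG⟩ := exists_coloring_injective_on_fibers_of_fintype b
    (Set.rangeFactorization B) (Set.rangeFactorization G)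
    (fun r => by simpa [Subtype.ext_iff, Set.rangeFactorization] using hB r)
    fun c => by simpa [Subtype.ext_iff, Set.rangeFactorization] using hG c
  exact ⟨f, fun a a' h => hfB a a' (Subtype.ext h), fun a a' h => hfG a a' (Subtype.ext h)⟩

theorem exists_equiv_fin_monotone {α β : Type*} [Fintype α] [LinearOrder β] (key : α → β) :
    ∃ e : α ≃ Fin (Fintype.card α), Monotone (key ∘ e.symm) := by
  let e₀ := (Fintype.equivFin α).symm
  exact ⟨((Tuple.sort (key ∘ e₀)).trans e₀).symm, Tuple.monotone_sort (key ∘ e₀)⟩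

theorem exists_equiv_fin_mem_lt_card_and_antitone {α : Type*} [Fintype α] (M : Finset α)
    (w : α → ℕ) :
    ∃ e : α ≃ Fin (Fintype.card α), (∀ a ∈ M, (e a : ℕ) < #M) ∧
      ∀ a a', #M ≤ (e a : ℕ) → e a ≤ e a' → w a' ≤ w a := by
  let key (a : α) : ℕ ×ₗ ℕᵒᵈ := toLex (if a ∈ M then 0 else 1, OrderDual.toDual (w a))
  obtain ⟨e, he⟩ := exists_equiv_fin_monotone key
  have hkey {a a' : α} (h : e a ≤ e a') : key a ≤ key a' := by simpa using he h
  have hM : ∀ a ∈ M, (e a : ℕ) < #M := fun a ha => by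
    have hsub : (Iic (e a)).map e.symm.toEmbedding ⊆ M := fun x hx => by
      obtain ⟨i, hi, rfl⟩ := mem_map.1 hx
      have := hkey (a := e.symm i) (a' := a) (by simpa using mem_Iic.1 hi)
      simp [key, Prod.Lex.le_iff, ha] at this
      exact this.1
    simpa using card_le_card hsub
  refine ⟨e, hM, fun a a' ha haa' => ?_⟩
  have hna : a ∉ M := fun h => (hM a h).not_ge ha
  have hna' : a' ∉ M := fun h => (hM a' h).not_ge (ha.trans haa')
  simpa [key, Prod.Lex.le_iff, hna, hna'] using hkey haa'

theorem sum_le_sum_add_of_shift {α : Type*} (blk w : α → ℕ) {W : ℕ} (hw : ∀ a, w a ≤ W)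
    {s s' : Finset α} (hs : Set.InjOn blk s)
    (hshift : ∀ a ∈ s, 2 ≤ blk a → ∃ a' ∈ s', blk a' + 1 = blk a ∧ w a ≤ w a') :
    ∑ a ∈ s, w a ≤ ∑ a ∈ s', w a + 2 * W := by
  choose! φ hφs' hφblk hφw using hshift
  have hhigh : ∑ a ∈ s with 2 ≤ blk a, w a ≤ ∑ a ∈ s', w a := by
    have hinj : Set.InjOn φ ({a ∈ s | 2 ≤ blk a} : Finset α) := fun a ha a' ha' h => by
      simp only [coe_filter, Set.mem_ofPred_eq] at ha ha'
      exact hs ha.1 ha'.1 (by rw [← hφblk a ha.1 ha.2, ← hφblk a' ha'.1 ha'.2, h])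
    calc ∑ a ∈ s with 2 ≤ blk a, w a
        ≤ ∑ a ∈ s with 2 ≤ blk a, w (φ a) := sum_le_sum fun a ha => by
          simp only [mem_filter] at ha
          exact hφw a ha.1 ha.2
      _ = ∑ a ∈ {a ∈ s | 2 ≤ blk a}.image φ, w a := (sum_image hinj).symm
      _ ≤ ∑ a ∈ s', w a := sum_le_sum_of_subset <| image_subset_iff.2 fun a ha => by
          simp only [mem_filter] at ha
          exact hφs' a ha.1 ha.2
  have hlow : ∑ a ∈ s with ¬2 ≤ blk a, w a ≤ 2 * W := by
    have hcard : #{a ∈ s | ¬2 ≤ blk a} ≤ #(range 2) :=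
      card_le_card_of_injOn blk (fun a ha => by simp_all) (hs.mono (filter_subset _ _))
    calc ∑ a ∈ s with ¬2 ≤ blk a, w a ≤ #{a ∈ s | ¬2 ≤ blk a} • W :=
          sum_le_card_nsmul _ _ _ fun a _ => hw a
      _ ≤ 2 * W := by simpa using Nat.mul_le_mul_right W hcard
  rw [← sum_filter_add_sum_filter_not s (fun a => 2 ≤ blk a)]
  omega

theorem card_filter_div_eq_le {α : Type*} [Fintype α] {p : α → ℕ} (hp : Function.Injective p)
    {b : ℕ} (hb : 0 < b) (t : ℕ) : #{a | p a / b = t} ≤ b := by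
  have hinj : Set.InjOn (fun a => p a % b) ({a | p a / b = t} : Finset α) :=
    fun a ha a' ha' h => by
      simp only [coe_filter, mem_univ, true_and, Set.mem_ofPred_eq] at ha ha'
      exact hp (by rw [← Nat.div_add_mod (p a) b, ← Nat.div_add_mod (p a') b, ha, ha']; simp_all)
  simpa using card_le_card_of_injOn (t := range b) _ (fun a _ => by simpa using Nat.mod_lt _ hb)
    hinj

theorem exists_div_eq_and_apply_eq {α : Type*} [Fintype α] {n b t : ℕ} (e : α ≃ Fin n)
    (f : α → Fin b) (hf : Set.InjOn f {a | (e a : ℕ) / b = t}) (ht : (t + 1) * b ≤ n)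
    (j : Fin b) : ∃ a, (e a : ℕ) / b = t ∧ f a = j := by
  let block : Finset α := {a | (e a : ℕ) / b = t}
  let enum (m : Fin b) : α := e.symm ⟨t * b + m, by rw [add_mul, one_mul] at ht; omega⟩
  have hcard : #(univ : Finset (Fin b)) ≤ #block :=
    card_le_card_of_injOn enum (fun m _ => by
      simp [block, enum, add_comm, Nat.add_mul_div_right _ _ m.pos, Nat.div_eq_of_lt m.isLt])
      fun m _ m' _ h => Fin.ext (by simpa [enum] using h)
  obtain ⟨a, ha, rfl⟩ := surjOn_of_injOn_of_card_le f (fun _ _ => mem_coe.2 (mem_univ _))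
    (by simpa [block] using hf) hcard (mem_univ j)
  exact ⟨a, by simpa [block] using ha, rfl⟩

theorem exists_coloring_sum_le_sum_add {α ι : Type*} [Fintype α] {n b W : ℕ} (hb : 0 < b)
    (e : α ≃ Fin n) (g : α → ι) (w : α → ℕ) (hw : ∀ a, w a ≤ W)
    (hgroup : ∀ u, #{a | g a = u} ≤ b)
    (hsorted : ∀ a a', b ≤ (e a : ℕ) → e a ≤ e a' → w a' ≤ w a) :
    ∃ f : α → Fin b, (∀ a a', (e a : ℕ) < b → (e a' : ℕ) < b → f a = f a' → a = a') ∧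
      (∀ a a', g a = g a' → f a = f a' → a = a') ∧
      ∀ i j, ∑ a with f a = i, w a ≤ ∑ a with f a = j, w a + 2 * W := by
  let blk (a : α) : ℕ := (e a : ℕ) / b
  have hp : Function.Injective fun a => (e a : ℕ) := Fin.val_injective.comp e.injective
  obtain ⟨f, hfblk, hfgrp⟩ := exists_coloring_injective_on_fibers b blk g
    (fun t => by convert card_filter_div_eq_le hp hb t) hgroup
  refine ⟨f, fun a a' ha ha' => hfblk a a' ?_, hfgrp, fun i j => ?_⟩
  · simp [blk, Nat.div_eq_of_lt ha, Nat.div_eq_of_lt ha']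
  refine sum_le_sum_add_of_shift blk w hw (fun a ha a' ha' h => hfblk a a' h
    ((mem_filter.1 ha).2.trans (mem_filter.1 ha').2.symm)) fun a _ h2 => ?_
  -- the block of `a` is preceded by a full block, in which every colour occurs
  obtain ⟨t, ht⟩ : ∃ t, blk a = t + 1 := ⟨blk a - 1, by omega⟩
  have hta : (t + 1) * b ≤ e a := ht ▸ Nat.div_mul_le_self _ _
  obtain ⟨a', ha't, rfl⟩ := exists_div_eq_and_apply_eq e f
    (fun x hx y hy => hfblk x y (hx.trans hy.symm)) (hta.trans (e a).isLt.le) j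
  have h1 : t * b ≤ e a' := ha't ▸ Nat.div_mul_le_self _ _
  have h2 : (e a' : ℕ) < t * b + b := ha't ▸ Nat.lt_div_mul_add hb
  have h3 : b ≤ t * b := Nat.le_mul_of_pos_left b (by omega)
  rw [add_mul, one_mul] at hta
  refine ⟨a', by simp, by rw [ht]; exact congrArg (· + 1) ha't, hsorted a' a (by omega) ?_⟩
  simp only [Fin.le_iff_val_le_val]
  omega

theorem div_card_sub_le_and_le_div_card_add {ι : Type*} [Fintype ι] (x : ι → ℝ) {D : ℝ}
    (h : ∀ i j, x i ≤ x j + D) (i : ι) :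
    (∑ j, x j) / Fintype.card ι - D ≤ x i ∧ x i ≤ (∑ j, x j) / Fintype.card ι + D := by
  have hcard : (0 : ℝ) < Fintype.card ι := by exact_mod_cast Fintype.card_pos_iff.2 ⟨i⟩
  have hlow := sum_le_sum fun j (_ : j ∈ univ) => h j i
  have hhigh := sum_le_sum fun j (_ : j ∈ univ) => sub_le_iff_le_add.2 (h i j)
  rw [sum_const, card_univ, nsmul_eq_mul] at hlow hhigh
  constructor
  · rw [sub_le_iff_le_add, div_le_iff₀ hcard]; linarith
  · rw [← sub_le_iff_le_add, le_div_iff₀ hcard]; linarith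

theorem edge_distribution_general
    (b W : ℕ) (hb : 1 ≤ b)
    {α ι : Type*} [Fintype α]
    (g : α → ι) (w : α → ℕ)
    (hw : ∀ a, 1 ≤ w a ∧ w a ≤ W)
    (hgroup : ∀ u : ι, (Finset.univ.filter (fun a => g a = u)).card ≤ b)
    (M : Finset α) (hM : M.card ≤ b) :
    ∃ f : α → Fin b,
      (∀ a ∈ M, ∀ a' ∈ M, f a = f a' → a = a') ∧
      (∀ a a' : α, g a = g a' → f a = f a' → a = a') ∧
      (∀ i j : Fin b,
        ((∑ a ∈ Finset.univ.filter (fun a => f a = i), (w a : ℤ)) -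
          ∑ a ∈ Finset.univ.filter (fun a => f a = j), (w a : ℤ)).natAbs ≤ 2 * W) ∧
      (∀ i : Fin b,
        (∑ a, (w a : ℝ)) / b - 2 * W ≤
            (∑ a ∈ Finset.univ.filter (fun a => f a = i), (w a : ℝ)) ∧
          (∑ a ∈ Finset.univ.filter (fun a => f a = i), (w a : ℝ)) ≤
            (∑ a, (w a : ℝ)) / b + 2 * W) := by
  obtain ⟨e, hMfirst, hsorted⟩ := exists_equiv_fin_mem_lt_card_and_antitone M w
  obtain ⟨f, hfirst, hfgrp, hbal⟩ := exists_coloring_sum_le_sum_add hb e g w (fun a => (hw a).2)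
    hgroup fun a a' ha => hsorted a a' (hM.trans ha)
  refine ⟨f, fun a ha a' ha' => hfirst a a' ((hMfirst a ha).trans_le hM)
    ((hMfirst a' ha').trans_le hM), hfgrp, fun i j => ?_, fun i => ?_⟩
  · have := hbal i j
    have := hbal j i
    push_cast [← Nat.cast_sum]
    omega
  · have := div_card_sub_le_and_le_div_card_add (fun i => ∑ a with f a = i, (w a : ℝ))
      (D := 2 * W) (fun i j => by exact_mod_cast hbal i j) i
    rwa [sum_fiberwise, Fintype.card_fin] at this

/-- edge-distribution lemma. Elements (indexed by a finite type `α`)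
with integer weights `w a ∈ {1,...,W}` are partitioned into groups via `g : α → ι`,
each group having at most `b` elements. Given `M ⊆ α` with `|M| ≤ b` whose elements
are the heaviest of their respective groups, the elements can be distributed into `b`
parts (via `f : α → Fin b`) so that each part contains at most one element of `M`,
at most one element of each group, any two parts have total weights differing by at
most `2W`, and consequently every part has total weight within `2W` of the average
`σ/b`. -/
theorem edge_distribution
    (b W : ℕ) (hb : 1 ≤ b) (hW : 1 ≤ W)
    {α ι : Type*} [Fintype α] [DecidableEq α]
    (g : α → ι) (w : α → ℕ)
    (hw : ∀ a, 1 ≤ w a ∧ w a ≤ W)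
    (hgroup : ∀ u : ι, (Finset.univ.filter (fun a => g a = u)).card ≤ b)
    (M : Finset α) (hM : M.card ≤ b)
    (hheavy : ∀ a ∈ M, ∀ a', a' ∉ M → g a' = g a → w a' ≤ w a) :
    ∃ f : α → Fin b,
      (∀ a ∈ M, ∀ a' ∈ M, f a = f a' → a = a') ∧
      (∀ a a' : α, g a = g a' → f a = f a' → a = a') ∧
      (∀ i j : Fin b,
        ((∑ a ∈ Finset.univ.filter (fun a => f a = i), (w a : ℤ)) -
          ∑ a ∈ Finset.univ.filter (fun a => f a = j), (w a : ℤ)).natAbs ≤ 2 * W) ∧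
      (∀ i : Fin b,
        (∑ a, (w a : ℝ)) / b - 2 * W ≤
            (∑ a ∈ Finset.univ.filter (fun a => f a = i), (w a : ℝ)) ∧
          (∑ a ∈ Finset.univ.filter (fun a => f a = i), (w a : ℝ)) ≤
            (∑ a, (w a : ℝ)) / b + 2 * W) :=
  edge_distribution_general b W hb g w hw hgroup M hM
end
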